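/- Let $\sigma > 0$, $\tau = 1/\sigma^2$, and let $x_S, x_T$ be disjoint finite multisets of reals of sizes $n_s, n_t \geq 1$ such that $F(\tau; x_S, x_T) := \frac{n_s^2 \bar{x}_S^2}{n_s+\tau} + \frac{n_t^2 \bar{x}_T^2}{n_t+\tau} - \frac{(n_s+n_t)^2 \bar{x}_{S\cup T}^2}{n_s+n_t+\tau} \geq 0$. Then, with $m(\cdot)$ the Gaussian-prior marginal likelihood, $\frac{m(x_S) m(x_T)}{m(x_S \cup x_T)} \geq \sqrt{\frac{1}{2} \cdot \frac{\tau}{1+\tau} \cdot \frac{n_s + n_t}{n_s n_t}}$. -/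

import Mathlib

/-!
Completing the square in `θ` and using `∫ exp (-a θ²) = √(π / a)` gives the closed form
`m(x) = (2π)^(-n/2) √(τ / (n + τ)) exp (-(∑ xᵢ² - (∑ xᵢ)² / (n + τ)) / 2)`.
In the ratio `m(x_S) m(x_T) / m(x_S ∪ x_T)` the terms `∑ xᵢ²` and the powers of `2π` cancel,
leaving `√(τ (n_s + n_t + τ) / ((n_s + τ)(n_t + τ))) · exp (F / 2)`; the exponential is at
least `1` since `F ≥ 0`, and the square root dominates the claimed bound by an elementary
inequality that uses `n_s, n_t ≥ 1`.
-/

/-- Marginal likelihood of the observations `x` under unit-variance Gaussian likelihood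
with a Gaussian prior of mean `0` and precision `τ` on the common mean `θ`. -/
noncomputable def gaussMarginalPrec (τ : ℝ) {m : ℕ} (x : Fin m → ℝ) : ℝ :=
  ∫ θ : ℝ, (∏ i, 1 / Real.sqrt (2 * Real.pi) * Real.exp (-(x i - θ) ^ 2 / 2)) *
    (Real.sqrt τ / Real.sqrt (2 * Real.pi) * Real.exp (-τ * θ ^ 2 / 2))

open Real MeasureTheory

lemma sum_neg_sq_sub_div_two {m : ℕ} (x : Fin m → ℝ) (θ : ℝ) :
    ∑ i, -(x i - θ) ^ 2 / 2 = -(∑ i, x i ^ 2 - 2 * (∑ i, x i) * θ + m * θ ^ 2) / 2 := by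
  have hterm (i : Fin m) : -(x i - θ) ^ 2 / 2 = -(x i ^ 2 / 2) + θ * x i - θ ^ 2 / 2 := by ring
  simp only [hterm, Finset.sum_sub_distrib, Finset.sum_add_distrib, Finset.sum_neg_distrib,
    ← Finset.sum_div, ← Finset.mul_sum, Finset.sum_const, Finset.card_univ, Fintype.card_fin,
    nsmul_eq_mul]
  ring

lemma gaussMarginalPrec_integrand_eq (τ : ℝ) {m : ℕ} (x : Fin m → ℝ) (hτ : (m : ℝ) + τ ≠ 0)
    (θ : ℝ) :
    (∏ i, 1 / √(2 * π) * exp (-(x i - θ) ^ 2 / 2)) * (√τ / √(2 * π) * exp (-τ * θ ^ 2 / 2)) =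
      (√(2 * π))⁻¹ ^ m * (√τ / √(2 * π)) *
        exp (-(∑ i, x i ^ 2 - (∑ i, x i) ^ 2 / (m + τ)) / 2) *
        exp (-((m + τ) / 2) * (θ - (∑ i, x i) / (m + τ)) ^ 2) := by
  rw [Finset.prod_mul_distrib, Finset.prod_const, Finset.card_univ, Fintype.card_fin,
    ← exp_sum, sum_neg_sq_sub_div_two, one_div]
  have hexp : exp (-(∑ i, x i ^ 2 - 2 * (∑ i, x i) * θ + m * θ ^ 2) / 2) * exp (-τ * θ ^ 2 / 2) =
      exp (-(∑ i, x i ^ 2 - (∑ i, x i) ^ 2 / (m + τ)) / 2) *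
        exp (-((m + τ) / 2) * (θ - (∑ i, x i) / (m + τ)) ^ 2) := by
    rw [← exp_add, ← exp_add]
    congr 1
    field_simp
    ring
  linear_combination (√(2 * π))⁻¹ ^ m * (√τ / √(2 * π)) * hexp

theorem gaussMarginalPrec_eq {τ : ℝ} (hτ : 0 < τ) {m : ℕ} (x : Fin m → ℝ) :
    gaussMarginalPrec τ x = (√(2 * π))⁻¹ ^ m * √(τ / (m + τ)) *
      exp (-(∑ i, x i ^ 2 - (∑ i, x i) ^ 2 / (m + τ)) / 2) := by
  have ha : 0 < (m : ℝ) + τ := by positivity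
  simp only [gaussMarginalPrec, gaussMarginalPrec_integrand_eq τ x ha.ne', integral_const_mul,
    integral_sub_right_eq_self (fun θ => exp (-((m + τ) / 2) * θ ^ 2)), integral_gaussian]
  have hsqrt : √τ / √(2 * π) * √(π / ((m + τ) / 2)) = √(τ / (m + τ)) := by
    rw [← sqrt_div hτ.le, ← sqrt_mul (by positivity)]
    congr 1
    field_simp
  linear_combination (√(2 * π))⁻¹ ^ m * exp (-(∑ i, x i ^ 2 - (∑ i, x i) ^ 2 / (m + τ)) / 2) * hsqrt

theorem gaussMarginalPrec_mul_div_append {τ : ℝ} (hτ : 0 < τ) {m n : ℕ} (x : Fin m → ℝ)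
    (y : Fin n → ℝ) :
    gaussMarginalPrec τ x * gaussMarginalPrec τ y / gaussMarginalPrec τ (Fin.append x y) =
      √(τ * ((m + n + τ) / ((m + τ) * (n + τ)))) *
        exp (((∑ i, x i) ^ 2 / (m + τ) + (∑ i, y i) ^ 2 / (n + τ) -
          (∑ i, x i + ∑ i, y i) ^ 2 / (m + n + τ)) / 2) := by
  have hsum : ∑ i, Fin.append x y i = ∑ i, x i + ∑ i, y i := by simp [Fin.sum_univ_add]
  have hsum_sq : ∑ i, Fin.append x y i ^ 2 = ∑ i, x i ^ 2 + ∑ i, y i ^ 2 := by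
    simp [Fin.sum_univ_add]
  rw [gaussMarginalPrec_eq hτ, gaussMarginalPrec_eq hτ, gaussMarginalPrec_eq hτ, hsum, hsum_sq,
    Nat.cast_add, pow_add]
  set F := (∑ i, x i) ^ 2 / (m + τ) + (∑ i, y i) ^ 2 / (n + τ) -
    (∑ i, x i + ∑ i, y i) ^ 2 / (m + n + τ) with hF
  have hexp : exp (-(∑ i, x i ^ 2 - (∑ i, x i) ^ 2 / (m + τ)) / 2) *
      exp (-(∑ i, y i ^ 2 - (∑ i, y i) ^ 2 / (n + τ)) / 2) =
      exp (-(∑ i, x i ^ 2 + ∑ i, y i ^ 2 - (∑ i, x i + ∑ i, y i) ^ 2 / (m + n + τ)) / 2) *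
        exp (F / 2) := by
    rw [← exp_add, ← exp_add, hF]
    ring_nf
  have hsqrt : √(τ / (m + τ)) * √(τ / (n + τ)) =
      √(τ / (m + n + τ)) * √(τ * ((m + n + τ) / ((m + τ) * (n + τ)))) := by
    rw [← sqrt_mul (by positivity), ← sqrt_mul (by positivity)]
    congr 1
    field_simp
  rw [div_eq_iff (by positivity)]
  linear_combination (√(2 * π))⁻¹ ^ m * (√(2 * π))⁻¹ ^ n *
    (√(τ / (m + τ)) * √(τ / (n + τ)) * hexp +
      exp (-(∑ i, x i ^ 2 + ∑ i, y i ^ 2 - (∑ i, x i + ∑ i, y i) ^ 2 / (m + n + τ)) / 2) *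
        exp (F / 2) * hsqrt)

theorem half_mul_div_one_add_mul_le (τ N T : ℝ) (hτ : 0 < τ) (hN : 1 ≤ N) (hT : 1 ≤ T) :
    1 / 2 * (τ / (1 + τ)) * ((N + T) / (N * T)) ≤ τ * ((N + T + τ) / ((N + τ) * (T + τ))) := by
  have hgap : 0 ≤ 2 * (N * T) - (N + T) := by
    nlinarith [mul_nonneg (sub_nonneg.2 hN) (sub_nonneg.2 hT)]
  -- The difference of the two sides is `NT(N+T) + 2NTτ + (τ(N+T) + τ²)(2NT - N - T)`.
  have hcore : (N + T) * ((N + τ) * (T + τ)) ≤ (N + T + τ) * (2 * (1 + τ) * (N * T)) := by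
    nlinarith [mul_nonneg (by positivity : (0:ℝ) ≤ τ * (N + T) + τ ^ 2) hgap,
      (by positivity : (0:ℝ) ≤ N * T * (N + T) + 2 * (N * T) * τ)]
  rw [show 1 / 2 * (τ / (1 + τ)) * ((N + T) / (N * T)) = τ * (N + T) / (2 * (1 + τ) * (N * T)) by
      field_simp, mul_div_assoc', div_le_div_iff₀ (by positivity) (by positivity), mul_assoc,
      mul_assoc]
  exact mul_le_mul_of_nonneg_left hcore hτ.le

theorem stmt_15 (σ : ℝ) (hσ : 0 < σ) (τ : ℝ) (hτ : τ = 1 / σ ^ 2)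
    (ns nt : ℕ) (hns : 1 ≤ ns) (hnt : 1 ≤ nt)
    (xS : Fin ns → ℝ) (xT : Fin nt → ℝ) (xbarS xbarT xbarU : ℝ)
    (hS : xbarS = (∑ i, xS i) / ns) (hT : xbarT = (∑ i, xT i) / nt)
    (hU : xbarU = (ns * xbarS + nt * xbarT) / (ns + nt))
    (hF : 0 ≤ (ns : ℝ) ^ 2 * xbarS ^ 2 / (ns + τ) + (nt : ℝ) ^ 2 * xbarT ^ 2 / (nt + τ) -
      ((ns : ℝ) + nt) ^ 2 * xbarU ^ 2 / ((ns : ℝ) + nt + τ)) :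
    Real.sqrt (1 / 2 * (τ / (1 + τ)) * (((ns : ℝ) + nt) / (ns * nt))) ≤
      gaussMarginalPrec τ xS * gaussMarginalPrec τ xT /
        gaussMarginalPrec τ (Fin.append xS xT) := by
  have hτ0 : 0 < τ := by rw [hτ]; positivity
  have hns1 : (1 : ℝ) ≤ ns := by exact_mod_cast hns
  have hnt1 : (1 : ℝ) ≤ nt := by exact_mod_cast hnt
  have hsumS : (ns : ℝ) * xbarS = ∑ i, xS i := by rw [hS]; field_simp
  have hsumT : (nt : ℝ) * xbarT = ∑ i, xT i := by rw [hT]; field_simp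
  have hsumU : ((ns : ℝ) + nt) * xbarU = ∑ i, xS i + ∑ i, xT i := by
    rw [hU, ← hsumS, ← hsumT]; field_simp
  rw [gaussMarginalPrec_mul_div_append hτ0, ← hsumU, ← hsumS, ← hsumT]
  calc √(1 / 2 * (τ / (1 + τ)) * ((ns + nt) / (ns * nt)))
      ≤ √(τ * ((ns + nt + τ) / ((ns + τ) * (nt + τ)))) :=
        sqrt_le_sqrt (half_mul_div_one_add_mul_le τ ns nt hτ0 hns1 hnt1)
    _ ≤ _ := le_mul_of_one_le_right (sqrt_nonneg _)
          (one_le_exp (div_nonneg (by rwa [mul_pow, mul_pow, mul_pow]) zero_le_two))
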